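/- Let N ∈ ℕ and 0 < ε0 < (1−ψ)/(2N). For every probability vector p with decreasing entries such that p_1 ≤ ψ and p_2 ≤ ε0, the Lyapunov exponent satisfies ∫ log|T′| dμ_p ≥ (1−ψ)·log N. -/

import Mathlib

open MeasureTheory Filter Set
open scoped ENNReal

instance : MeasurableSpace ℕ+ := ⊤

/-- The Gauss map `T x = 1/x - ⌊1/x⌋` (with `T 0 = 0`). -/
noncomputable def gaussMap (x : ℝ) : ℝ := if x = 0 then 0 else Int.fract x⁻¹

/-- Finite continued fraction approximants: `cfApprox n a` is the value of the
continued fraction `1/(a 0 + 1/(a 1 + ⋯))` truncated after `n` levels. -/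
noncomputable def cfApprox : ℕ → (ℕ → ℕ+) → ℝ
  | 0, _ => 0
  | n + 1, a => (((a 0 : ℕ) : ℝ) + cfApprox n (fun k => a (k + 1)))⁻¹

/-- The continued fraction coding map `Π : ℕ^ℕ → [0,1] ∖ ℚ`. -/
noncomputable def cfVal (a : ℕ → ℕ+) : ℝ := limUnder atTop (fun n => cfApprox n a)

/-- `p` is a countable probability vector `(p_n)_{n ≥ 1}`. -/
def IsProbVec (p : ℕ+ → ℝ) : Prop := (∀ n, 0 ≤ p n) ∧ HasSum p 1

/-- `m` is the Bernoulli product measure on `ℕ^ℕ` with weights `p`: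
it assigns to each cylinder the product of the weights of its digits. -/
def IsBernoulli (p : ℕ+ → ℝ) (m : Measure (ℕ → ℕ+)) : Prop :=
  ∀ (n : ℕ) (i : ℕ → ℕ+),
    m {a | ∀ k < n, a k = i k} = ENNReal.ofReal (∏ k ∈ Finset.range n, p (i k))

/-- Hausdorff dimension of a measure: `inf { dim_H A : μ A = 1 }`. -/
noncomputable def dimMeasure (μ : Measure ℝ) : ℝ≥0∞ :=
  ⨅ (A : Set ℝ) (_ : μ A = 1), dimH A


/-- `ψ = |T'(z₁)|^{-1/4} = z₁^{1/2}`, where `z₁ = (√5 - 1)/2` is the fixed point of the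
Gauss map with continued fraction expansion `(1,1,1,…)`. -/
noncomputable def psi : ℝ := Real.sqrt ((Real.sqrt 5 - 1) / 2)

/-!
The first digit of a coding sequence `a` pins down its point: `1/(a₀+1) ≤ Π(a) ≤ 1/a₀`, so
`log |T'(Π a)| = -2 log Π(a) ≥ 2 log N` as soon as `a₀ > N`. Under `m_p` the digits `1, …, N`
carry mass at most `p₁ + (N-1) p₂ ≤ ψ + (N-1) ε₀ < (1 + ψ)/2`, so `a₀ > N` has probability at
least `(1 - ψ)/2`, and Markov's inequality gives `∫ log |T'| dμ_p ≥ (1 - ψ)/2 · 2 log N`.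

The analytic input is that `Π` is well defined and measurable: the composite of two inverse
branches `x ↦ 1/(b + x)` of `T` contracts `[0, 1]` by a factor `4`, so the approximants
`cfApprox n a` form a Cauchy sequence.
-/

open Topology

/-- `cfMap n a x = 1/(a 0 + 1/(a 1 + ⋯ + 1/(a (n-1) + x)))`. -/
noncomputable def cfMap : ℕ → (ℕ → ℕ+) → ℝ → ℝ
  | 0, _, x => x
  | n + 1, a, x => (((a 0 : ℕ) : ℝ) + cfMap n (fun k => a (k + 1)) x)⁻¹

lemma one_le_digit (a : ℕ → ℕ+) (j : ℕ) : (1 : ℝ) ≤ ((a j : ℕ) : ℝ) := by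
  exact_mod_cast (a j).pos

lemma inv_add_mem_Icc {b x : ℝ} (hb : 1 ≤ b) (hx : 0 ≤ x) : (b + x)⁻¹ ∈ Icc (0 : ℝ) 1 :=
  ⟨by positivity, inv_le_one_of_one_le₀ (by linarith)⟩

lemma cfMap_mem_Icc {x : ℝ} (hx : x ∈ Icc (0 : ℝ) 1) :
    ∀ (n : ℕ) (a : ℕ → ℕ+), cfMap n a x ∈ Icc (0 : ℝ) 1
  | 0, _ => hx
  | n + 1, a => inv_add_mem_Icc (one_le_digit a 0) (cfMap_mem_Icc hx n _).1

lemma cfMap_zero : ∀ (n : ℕ) (a : ℕ → ℕ+), cfMap n a 0 = cfApprox n a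
  | 0, _ => rfl
  | n + 1, a => by simp only [cfMap, cfApprox, cfMap_zero n]

lemma cfApprox_mem_Icc (n : ℕ) (a : ℕ → ℕ+) : cfApprox n a ∈ Icc (0 : ℝ) 1 :=
  cfMap_zero n a ▸ cfMap_mem_Icc (by simp) n a

lemma cfApprox_add : ∀ (n k : ℕ) (a : ℕ → ℕ+),
    cfApprox (n + k) a = cfMap n a (cfApprox k (fun j => a (j + n)))
  | 0, k, a => by simp [cfMap]
  | n + 1, k, a => by
    rw [Nat.add_right_comm]
    simp only [cfApprox, cfMap, cfApprox_add n k, add_assoc]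

lemma abs_inv_add_sub_inv_add {b x y : ℝ} (hx : 0 < b + x) (hy : 0 < b + y) :
    |(b + x)⁻¹ - (b + y)⁻¹| = |x - y| / ((b + x) * (b + y)) := by
  rw [inv_sub_inv hx.ne' hy.ne', add_sub_add_left_eq_sub, abs_div, abs_sub_comm,
    abs_of_pos (mul_pos hx hy)]

lemma abs_inv_add_sub_inv_add_le {b x y : ℝ} (hb : 1 ≤ b) (hx : 0 ≤ x) (hy : 0 ≤ y) :
    |(b + x)⁻¹ - (b + y)⁻¹| ≤ |x - y| := by
  rw [abs_inv_add_sub_inv_add (by linarith) (by linarith)]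
  exact div_le_self (abs_nonneg _) (one_le_mul_of_one_le_of_one_le (by linarith) (by linarith))

lemma abs_inv_add_inv_add_sub_le {b c s t : ℝ} (hb : 1 ≤ b) (hc : 1 ≤ c) (hs : 0 ≤ s)
    (ht : 0 ≤ t) : |(b + (c + s)⁻¹)⁻¹ - (b + (c + t)⁻¹)⁻¹| ≤ |s - t| / 4 := by
  have hcs : 0 < c + s := by linarith
  have hct : 0 < c + t := by linarith
  -- `(b + (c + u)⁻¹) (c + u) = b (c + u) + 1 ≥ 2`
  have two_le {u : ℝ} (hu : 0 ≤ u) : 2 ≤ (b + (c + u)⁻¹) * (c + u) := by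
    rw [add_mul, inv_mul_cancel₀ (by linarith)]
    nlinarith [mul_le_mul hb (by linarith : 1 ≤ c + u) zero_le_one (by linarith)]
  rw [abs_inv_add_sub_inv_add (by positivity) (by positivity), abs_inv_add_sub_inv_add hcs hct,
    div_div]
  refine div_le_div_of_nonneg_left (abs_nonneg _) (by norm_num) ?_
  calc (4 : ℝ) ≤ ((b + (c + s)⁻¹) * (c + s)) * ((b + (c + t)⁻¹) * (c + t)) := by
        nlinarith [two_le hs, two_le ht]
    _ = _ := by ring

lemma abs_cfMap_sub_le : ∀ (n : ℕ) (a : ℕ → ℕ+) {x y : ℝ}, x ∈ Icc (0 : ℝ) 1 →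
    y ∈ Icc (0 : ℝ) 1 → |cfMap n a x - cfMap n a y| ≤ 2 * (1 / 2) ^ n * |x - y|
  | 0, _, x, y, _, _ => by simp only [cfMap]; linarith [abs_nonneg (x - y)]
  | 1, a, _, _, hx, hy => by
    simpa [cfMap] using abs_inv_add_sub_inv_add_le (one_le_digit a 0) hx.1 hy.1
  | n + 2, a, x, y, hx, hy => by
    simp only [cfMap]
    calc _ ≤ |cfMap n (fun k => a (k + 1 + 1)) x - cfMap n (fun k => a (k + 1 + 1)) y| / 4 :=
          abs_inv_add_inv_add_sub_le (one_le_digit a 0) (one_le_digit a 1)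
            (cfMap_mem_Icc hx n _).1 (cfMap_mem_Icc hy n _).1
      _ ≤ 2 * (1 / 2) ^ n * |x - y| / 4 := by gcongr; exact abs_cfMap_sub_le n _ hx hy
      _ = 2 * (1 / 2) ^ (n + 2) * |x - y| := by ring

lemma dist_cfApprox_succ_le (n : ℕ) (a : ℕ → ℕ+) :
    dist (cfApprox n a) (cfApprox (n + 1) a) ≤ 2 * (1 / 2) ^ n := by
  have hz := cfApprox_mem_Icc 1 (fun j => a (j + n))
  rw [← cfMap_zero, cfApprox_add n 1, Real.dist_eq]
  calc _ ≤ 2 * (1 / 2) ^ n * |0 - cfApprox 1 (fun j => a (j + n))| :=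
        abs_cfMap_sub_le n a (by simp) hz
    _ ≤ 2 * (1 / 2) ^ n * 1 := by
        gcongr
        rw [zero_sub, abs_neg, abs_of_nonneg hz.1]
        exact hz.2
    _ = _ := mul_one _

lemma tendsto_cfApprox (a : ℕ → ℕ+) :
    Tendsto (fun n => cfApprox n a) atTop (𝓝 (cfVal a)) :=
  (cauchySeq_of_le_geometric _ 2 (by norm_num) (dist_cfApprox_succ_le · a)).tendsto_limUnder

lemma cfVal_mem_Icc (a : ℕ → ℕ+) :
    cfVal a ∈ Icc ((((a 0 : ℕ) : ℝ) + 1)⁻¹) (((a 0 : ℕ) : ℝ))⁻¹ := by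
  refine isClosed_Icc.mem_of_tendsto ((tendsto_cfApprox a).comp (tendsto_add_atTop_nat 1))
    (Eventually.of_forall fun n => ?_)
  have hn := cfApprox_mem_Icc n (fun k => a (k + 1))
  have ha := one_le_digit a 0
  exact ⟨inv_anti₀ (by linarith [hn.1]) (by linarith [hn.2]),
    inv_anti₀ (by linarith) (by linarith [hn.1])⟩

lemma log_digit_le_neg_log_cfVal (a : ℕ → ℕ+) :
    Real.log ((a 0 : ℕ) : ℝ) ≤ -Real.log (cfVal a) := by
  have h := cfVal_mem_Icc a
  have ha := one_le_digit a 0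
  rw [le_neg, ← Real.log_inv]
  exact Real.log_le_log ((by positivity : (0 : ℝ) < _).trans_le h.1) h.2

lemma measurable_cfApprox : ∀ n : ℕ, Measurable (cfApprox n)
  | 0 => measurable_const
  | n + 1 => by
    have hdigit : Measurable fun a : ℕ → ℕ+ => ((a 0 : ℕ) : ℝ) :=
      (measurable_from_top (f := fun j : ℕ+ => ((j : ℕ) : ℝ))).comp (measurable_pi_apply 0)
    exact (hdigit.add ((measurable_cfApprox n).comp
      (measurable_pi_lambda _ fun k => measurable_pi_apply (k + 1)))).inv

lemma measurable_cfVal : Measurable cfVal :=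
  measurable_of_tendsto_metrizable measurable_cfApprox (tendsto_pi_nhds.2 tendsto_cfApprox)

lemma Antitone.sum_range_succPNat_le {p : ℕ+ → ℝ} (hp : Antitone p) (M : ℕ) :
    ∑ i ∈ Finset.range (M + 1), p i.succPNat ≤ p 1 + M * p 2 := by
  rw [Finset.sum_range_succ', add_comm]
  refine add_le_add le_rfl ?_
  calc ∑ i ∈ Finset.range M, p (i + 1).succPNat ≤ ∑ _i ∈ Finset.range M, p 2 :=
        Finset.sum_le_sum fun i _ => hp (by simp [← PNat.coe_le_coe])
    _ = M * p 2 := by simp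

section Bernoulli

variable {p : ℕ+ → ℝ} {m : Measure (ℕ → ℕ+)}

lemma IsBernoulli.measure_univ (hb : IsBernoulli p m) : m univ = 1 := by
  simpa using hb 0 (fun _ => 1)

lemma IsBernoulli.measure_digit_eq (hb : IsBernoulli p m) (j : ℕ+) :
    m {a | a 0 = j} = ENNReal.ofReal (p j) := by
  simpa [Nat.lt_one_iff] using hb 1 (fun _ => j)

lemma IsBernoulli.measure_digit_le (hb : IsBernoulli p m) (hp : ∀ j, 0 ≤ p j) (n : ℕ) :
    m {a | (a 0 : ℕ) ≤ n} ≤ ENNReal.ofReal (∑ i ∈ Finset.range n, p i.succPNat) := by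
  rw [ENNReal.ofReal_sum_of_nonneg fun i _ => hp _]
  calc m {a | (a 0 : ℕ) ≤ n} ≤ m (⋃ i ∈ Finset.range n, {a | a 0 = i.succPNat}) :=
        measure_mono fun a ha => mem_iUnion₂.2 ⟨(a 0).natPred, by
          simpa [PNat.natPred] using Nat.sub_one_lt_of_le (a 0).pos ha, by simp⟩
    _ ≤ ∑ i ∈ Finset.range n, m {a | a 0 = i.succPNat} := measure_biUnion_finset_le _ _
    _ = _ := Finset.sum_congr rfl fun i _ => hb.measure_digit_eq _

lemma IsBernoulli.ofReal_one_sub_sum_le_measure_digit_gt (hb : IsBernoulli p m)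
    (hp : ∀ j, 0 ≤ p j) (n : ℕ) :
    ENNReal.ofReal (1 - ∑ i ∈ Finset.range n, p i.succPNat) ≤ m {a | n < (a 0 : ℕ)} := by
  have hcompl : {a : ℕ → ℕ+ | n < (a 0 : ℕ)} = {a | (a 0 : ℕ) ≤ n}ᶜ := by ext; simp
  rw [ENNReal.ofReal_sub _ (Finset.sum_nonneg fun i _ => hp _), ENNReal.ofReal_one,
    tsub_le_iff_right, hcompl, ← hb.measure_univ]
  calc m univ ≤ m {a | (a 0 : ℕ) ≤ n} + m {a | (a 0 : ℕ) ≤ n}ᶜ := measure_univ_le_add_compl _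
    _ ≤ _ := by rw [add_comm]; gcongr; exact hb.measure_digit_le hp n

end Bernoulli

theorem lyapunov_lower_bound_general
    (N : ℕ) (ε0 : ℝ) (hε0' : ε0 < (1 - psi) / (2 * N))
    (p : ℕ+ → ℝ) (m : Measure (ℕ → ℕ+))
    (hp : IsProbVec p) (hb : IsBernoulli p m)
    (hmono : Antitone p)
    (hp1 : p 1 ≤ psi) (hp2 : p 2 ≤ ε0) :
    ENNReal.ofReal ((1 - psi) * Real.log N) ≤
      ∫⁻ x, ENNReal.ofReal (-(2 * Real.log x)) ∂(m.map cfVal) := by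
  have hε0 : 0 ≤ ε0 := (hp.1 2).trans hp2
  obtain ⟨M, rfl⟩ : ∃ M, N = M + 1 := Nat.exists_eq_add_one.2 <| Nat.pos_of_ne_zero <| by
    rintro rfl
    simp at hε0'
    linarith
  have hMε0 : 2 * (M + 1) * ε0 < 1 - psi := by
    rwa [lt_div_iff₀ (by positivity), mul_comm, Nat.cast_succ] at hε0'
  have hsmall : ∑ i ∈ Finset.range (M + 1), p i.succPNat ≤ (1 + psi) / 2 :=
    calc _ ≤ p 1 + M * p 2 := hmono.sum_range_succPNat_le M
      _ ≤ psi + M * ε0 := by gcongr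
      _ ≤ (1 + psi) / 2 := by nlinarith
  set c := ENNReal.ofReal (2 * Real.log ↑(M + 1))
  have hlarge : {a : ℕ → ℕ+ | M + 1 < (a 0 : ℕ)} ⊆
      cfVal ⁻¹' {x | c ≤ ENNReal.ofReal (-(2 * Real.log x))} := fun a ha => by
    have hlog : Real.log ↑(M + 1) ≤ Real.log ((a 0 : ℕ) : ℝ) :=
      Real.log_le_log (by positivity) (by exact_mod_cast ha.le)
    exact ENNReal.ofReal_le_ofReal (by linarith [log_digit_le_neg_log_cfVal a])
  calc ENNReal.ofReal ((1 - psi) * Real.log ↑(M + 1))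
      = c * ENNReal.ofReal ((1 - psi) / 2) := by
        rw [← ENNReal.ofReal_mul (by positivity)]
        ring_nf
    _ ≤ c * m {a | M + 1 < (a 0 : ℕ)} := by
        gcongr
        exact (ENNReal.ofReal_le_ofReal (by linarith)).trans
          (hb.ofReal_one_sub_sum_le_measure_digit_gt hp.1 _)
    _ ≤ c * m.map cfVal {x | c ≤ ENNReal.ofReal (-(2 * Real.log x))} := by
        gcongr
        exact (measure_mono hlarge).trans (Measure.le_map_apply measurable_cfVal.aemeasurable _)
    _ ≤ _ := mul_meas_ge_le_lintegral₀ (by fun_prop) c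

/-- Let `N ∈ ℕ` and `0 < ε₀ < (1-ψ)/(2N)`.  If `p` has decreasing entries with `p₁ ≤ ψ`
and `p₂ ≤ ε₀`, then the Lyapunov exponent satisfies `∫ log |T'| dμ_p ≥ (1-ψ) log N`
(here `log |T'(x)| = -2 log x` on `(0,1)`). -/
theorem lyapunov_lower_bound
    (N : ℕ) (ε0 : ℝ) (hε0 : 0 < ε0) (hε0' : ε0 < (1 - psi) / (2 * N))
    (p : ℕ+ → ℝ) (m : Measure (ℕ → ℕ+))
    (hp : IsProbVec p) (hm : IsProbabilityMeasure m) (hb : IsBernoulli p m)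
    (hmono : Antitone p)
    (hp1 : p 1 ≤ psi) (hp2 : p 2 ≤ ε0) :
    ENNReal.ofReal ((1 - psi) * Real.log N) ≤
      ∫⁻ x, ENNReal.ofReal (-(2 * Real.log x)) ∂(m.map cfVal) :=
  lyapunov_lower_bound_general N ε0 hε0' p m hp hb hmono hp1 hp2
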